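/- arXiv:math/0102061 — 4 statements merged into one kernel-verified Lean document; each statement's English description precedes it below -/
import Mathlib

section
/- Let F : ℍ × ℂ → ℂ be a holomorphic Jacobi function for SL₂(ℤ) ⋉ ℤ² of weight k and index I. If I < 0 then F vanishes identically. -/
open Complex

/-- The complex entry `A i j` of a matrix `A ∈ SL₂(ℤ)`. -/
noncomputable def slEntry (A : Matrix.SpecialLinearGroup (Fin 2) ℤ) (i j : Fin 2) : ℂ :=
  ((A i j : ℤ) : ℂ)

/-- A holomorphic Jacobi function for `SL₂(ℤ) ⋉ ℤ²` of weight `k` and negative index `Ind`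
vanishes identically.  Here the upper half-plane is encoded by the condition `0 < τ.im`,
holomorphy as joint analyticity on `ℍ × ℂ`, and the two transformation laws are the
elliptic law (for `(α,β) ∈ ℤ²`) and the modular law (for `A ∈ SL₂(ℤ)`). -/
theorem stmt2 (F : ℂ → ℂ → ℂ) (k Ind : ℤ)
    (hol : ∀ τ z : ℂ, 0 < τ.im → AnalyticAt ℂ (fun p : ℂ × ℂ => F p.1 p.2) (τ, z))
    (hell : ∀ τ z : ℂ, 0 < τ.im → ∀ α β : ℤ,
      F τ (z + α * τ + β) =
        F τ z * Complex.exp (-2 * Real.pi * Complex.I * Ind * (α ^ 2 * τ + 2 * α * z)))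
    (hmod : ∀ τ z : ℂ, 0 < τ.im → ∀ A : Matrix.SpecialLinearGroup (Fin 2) ℤ,
      F ((slEntry A 0 0 * τ + slEntry A 0 1) / (slEntry A 1 0 * τ + slEntry A 1 1))
          (z / (slEntry A 1 0 * τ + slEntry A 1 1)) =
        F τ z * (slEntry A 1 0 * τ + slEntry A 1 1) ^ k *
          Complex.exp (2 * Real.pi * Complex.I * Ind *
            (slEntry A 1 0 * z ^ 2 / (slEntry A 1 0 * τ + slEntry A 1 1))))
    (hI : Ind < 0) :
    ∀ τ z : ℂ, 0 < τ.im → F τ z = 0 := by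
  intro τ z hτ
  have hv0 : (0:ℝ) < τ.im := hτ
  set v : ℝ := τ.im with hv
  -- F τ is entire
  have hg : Differentiable ℂ fun w => F τ w := by
    intro w
    have h1 := hol τ w hτ
    have h2 : AnalyticAt ℂ (fun w : ℂ => ((τ, w) : ℂ × ℂ)) w :=
      analyticAt_const.prod analyticAt_id
    exact (h1.comp h2).differentiableAt
  -- bound on a compact set
  obtain ⟨C, hC⟩ := (isCompact_closedBall (0:ℂ) (1+v)).exists_bound_of_continuousOn
      (f := fun w : ℂ => ‖F τ w‖ * Real.exp (-(2*Real.pi*Ind*w.im^2/v)))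
      (Continuous.continuousOn (by have := hg.continuous; fun_prop))
  have hC0 : 0 ≤ C := by
    have := hC 0 (by simp [Metric.mem_closedBall]; positivity)
    exact le_trans (norm_nonneg _) this
  -- key growth bound
  have key : ∀ w : ℂ, ‖F τ w‖ ≤ C * Real.exp (2*Real.pi*Ind*w.im^2/v) := by
    intro w
    set α : ℤ := ⌊w.im / v⌋ with hα
    set w₁ : ℂ := w - α*τ with hw₁
    set β : ℤ := ⌊w₁.re⌋ with hβ
    set w₀ : ℂ := w₁ - β with hw₀
    have hw : w = w₀ + α*τ + β := by rw [hw₀, hw₁]; ring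
    have him : w₀.im = w.im - α*v := by
      simp [hw₀, hw₁, Complex.sub_im, Complex.mul_im, Complex.intCast_im, Complex.intCast_re, ← hv]
    have h0im : 0 ≤ w₀.im ∧ w₀.im < v := by
      rw [him]
      constructor
      · have : (α : ℝ) ≤ w.im / v := Int.floor_le _
        have := mul_le_mul_of_nonneg_right this (le_of_lt hv0)
        rw [div_mul_cancel₀] at this <;> [linarith; exact ne_of_gt hv0]
      · have : w.im / v < α + 1 := Int.lt_floor_add_one _
        have := mul_lt_mul_of_pos_right this hv0
        rw [div_mul_cancel₀] at this <;> [nlinarith; exact ne_of_gt hv0]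
    have h0re : 0 ≤ w₀.re ∧ w₀.re < 1 := by
      have hre' : w₀.re = w₁.re - (β:ℝ) := by simp [hw₀, Complex.sub_re]
      rw [hre']
      constructor
      · have := Int.floor_le w₁.re
        rw [hβ]; linarith
      · have := Int.lt_floor_add_one w₁.re
        rw [hβ]; linarith
    have hmem : w₀ ∈ Metric.closedBall (0:ℂ) (1+v) := by
      rw [Metric.mem_closedBall, dist_zero_right]
      calc ‖w₀‖ ≤ |w₀.re| + |w₀.im| := Complex.norm_le_abs_re_add_abs_im _
        _ ≤ 1 + v := by
            rw [_root_.abs_of_nonneg h0re.1, _root_.abs_of_nonneg h0im.1]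
            linarith [h0re.2, h0im.2]
    have hB := hC w₀ hmem
    have hB' : ‖F τ w₀‖ * Real.exp (-(2*Real.pi*Ind*w₀.im^2/v)) ≤ C := by
      refine le_trans ?_ hB
      exact le_abs_self _
    have hF : F τ w = F τ w₀ * Complex.exp (-2 * Real.pi * Complex.I * Ind * (α ^ 2 * τ + 2 * α * w₀)) := by
      rw [hw]; exact hell τ w₀ hτ α β
    have hre : ((-2 * (Real.pi:ℂ) * Complex.I * (Ind:ℂ) * ((α:ℂ) ^ 2 * τ + 2 * α * w₀)).re : ℝ)
        = 2*Real.pi*Ind*((α:ℝ)^2*v + 2*α*w₀.im) := by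
      simp [Complex.mul_re, Complex.mul_im, Complex.add_re, Complex.add_im, pow_two, ← hv]
    have hnorm : ‖F τ w‖ = ‖F τ w₀‖ * Real.exp (2*Real.pi*Ind*((α:ℝ)^2*v + 2*α*w₀.im)) := by
      rw [hF, norm_mul, Complex.norm_exp, hre]
    have hF0 : ‖F τ w₀‖ ≤ C * Real.exp (2*Real.pi*Ind*w₀.im^2/v) := by
      have heq : ‖F τ w₀‖ = (‖F τ w₀‖ * Real.exp (-(2*Real.pi*Ind*w₀.im^2/v))) * Real.exp (2*Real.pi*Ind*w₀.im^2/v) := by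
        rw [mul_assoc, ← Real.exp_add]
        simp
      rw [heq]
      exact mul_le_mul_of_nonneg_right hB' (Real.exp_pos _).le
    have hexp : Real.exp (2*Real.pi*Ind*w₀.im^2/v) * Real.exp (2*Real.pi*Ind*((α:ℝ)^2*v + 2*α*w₀.im))
        = Real.exp (2*Real.pi*Ind*w.im^2/v) := by
      rw [← Real.exp_add]
      congr 1
      have hwim : w.im = w₀.im + α*v := by rw [him]; ring
      rw [hwim]
      field_simp
      ring
    calc ‖F τ w‖ = ‖F τ w₀‖ * Real.exp (2*Real.pi*Ind*((α:ℝ)^2*v + 2*α*w₀.im)) := hnorm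
      _ ≤ (C * Real.exp (2*Real.pi*Ind*w₀.im^2/v)) * Real.exp (2*Real.pi*Ind*((α:ℝ)^2*v + 2*α*w₀.im)) :=
          mul_le_mul_of_nonneg_right hF0 (Real.exp_pos _).le
      _ = C * Real.exp (2*Real.pi*Ind*w.im^2/v) := by rw [mul_assoc, hexp]
  -- F τ is bounded, hence constant
  have hbdd : Bornology.IsBounded (Set.range fun w => F τ w) := by
    rw [isBounded_iff_forall_norm_le]
    refine ⟨C, ?_⟩
    rintro _ ⟨w, rfl⟩
    refine le_trans (key w) ?_
    have : Real.exp (2*Real.pi*Ind*w.im^2/v) ≤ 1 := by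
      rw [Real.exp_le_one_iff]
      have hπ : (0:ℝ) < Real.pi := Real.pi_pos
      have hInd : (Ind:ℝ) < 0 := by exact_mod_cast hI
      have : (0:ℝ) ≤ w.im^2 := sq_nonneg _
      have hnum : 2*Real.pi*Ind*w.im^2 ≤ 0 := by
        nlinarith [mul_nonneg hπ.le (sq_nonneg w.im), hInd]
      exact div_nonpos_of_nonpos_of_nonneg hnum hv0.le
    calc C * Real.exp (2*Real.pi*Ind*w.im^2/v) ≤ C * 1 :=
        mul_le_mul_of_nonneg_left this hC0
      _ = C := mul_one C
  have hconst : ∀ w : ℂ, F τ w = F τ 0 := fun w =>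
    hg.apply_eq_apply_of_bounded hbdd w 0
  -- F τ 0 = 0 by letting Im z → ∞
  have hInd : (Ind:ℝ) < 0 := by exact_mod_cast hI
  have hlim : Filter.Tendsto (fun t : ℝ => C * Real.exp (2*Real.pi*Ind*t^2/v))
      Filter.atTop (nhds 0) := by
    have h1 : Filter.Tendsto (fun t : ℝ => 2*Real.pi*Ind*t^2/v) Filter.atTop Filter.atBot := by
      have h2 : Filter.Tendsto (fun t : ℝ => t^2) Filter.atTop Filter.atTop :=
        Filter.tendsto_pow_atTop (by norm_num)
      have hc : 2*Real.pi*Ind/v < 0 := by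
        have hπ : (0:ℝ) < Real.pi := Real.pi_pos
        apply div_neg_of_neg_of_pos _ hv0
        nlinarith
      have := h2.const_mul_atTop_of_neg hc
      convert this using 2 with t
      ring
    have h3 := Real.tendsto_exp_atBot.comp h1
    have h4 := h3.const_mul C
    simpa using h4
  have h0 : F τ 0 = 0 := by
    have hle : ∀ t : ℝ, ‖F τ 0‖ ≤ C * Real.exp (2*Real.pi*Ind*t^2/v) := by
      intro t
      have := key (t * Complex.I)
      rw [hconst (t * Complex.I)] at this
      simpa using this
    have := ge_of_tendsto hlim (Filter.Eventually.of_forall hle)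
    exact norm_le_zero_iff.mp this
  rw [hconst z, h0]
end

section
/- Let F(τ, z) be a meromorphic function on ℍ × ℂ which satisfies the transformation law F((aτ+b)/(cτ+d), z/(cτ+d)) = F(τ,z)·(cτ+d)^k·exp(2πi·I·cz²/(cτ+d)) for all (a b; c d) ∈ SL₂(ℤ), and suppose that for each fixed τ the poles of F(τ, ·) are contained in ℚτ + ℚ and that F has no poles with z ∈ ℝ. Then F is holomorphic on ℍ × ℂ. -/
open Complex

private lemma mobius_im_pos (a b c d : ℤ) (τ : ℂ) (h : a * d - b * c = 1)
    (hτ : 0 < τ.im) (hD : ((c : ℂ) * τ + (d : ℂ)) ≠ 0) :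
    0 < (((a : ℂ) * τ + (b : ℂ)) / ((c : ℂ) * τ + (d : ℂ))).im := by
  have hN : 0 < Complex.normSq ((c : ℂ) * τ + (d : ℂ)) := Complex.normSq_pos.mpr hD
  rw [Complex.div_im, div_sub_div_same]
  apply div_pos _ hN
  have h' : (a : ℝ) * d - b * c = 1 := by exact_mod_cast h
  simp only [Complex.add_im, Complex.add_re, Complex.mul_re, Complex.mul_im,
    Complex.intCast_re, Complex.intCast_im]
  nlinarith [hτ, h']

/-- Pole elimination for Jacobi functions: if `F` is meromorphic (in `z`, for every `τ` in the
upper half-plane), satisfies the modular transformation law of weight `k` and index `Ind` for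
`SL₂(ℤ)`, its poles for fixed `τ` lie in `ℚτ + ℚ`, and it has no poles for real `z`, then `F`
is holomorphic (analytic at every point of `ℍ × ℂ`, fibrewise in `z`). -/
theorem stmt3 (F : ℂ → ℂ → ℂ) (k Ind : ℤ)
    (hmero : ∀ τ : ℂ, 0 < τ.im → ∀ z : ℂ, MeromorphicAt (F τ) z)
    (hmod : ∀ τ z : ℂ, 0 < τ.im → ∀ A : Matrix.SpecialLinearGroup (Fin 2) ℤ,
      F ((slEntry A 0 0 * τ + slEntry A 0 1) / (slEntry A 1 0 * τ + slEntry A 1 1))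
          (z / (slEntry A 1 0 * τ + slEntry A 1 1)) =
        F τ z * (slEntry A 1 0 * τ + slEntry A 1 1) ^ k *
          Complex.exp (2 * Real.pi * Complex.I * Ind *
            (slEntry A 1 0 * z ^ 2 / (slEntry A 1 0 * τ + slEntry A 1 1))))
    (hpoles : ∀ τ : ℂ, 0 < τ.im → ∀ z : ℂ,
      (¬ ∃ q r : ℚ, z = (q : ℂ) * τ + (r : ℂ)) → AnalyticAt ℂ (F τ) z)
    (hreal : ∀ τ : ℂ, 0 < τ.im → ∀ x : ℝ, AnalyticAt ℂ (F τ) (x : ℂ)) :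
    ∀ τ : ℂ, 0 < τ.im → ∀ z : ℂ, AnalyticAt ℂ (F τ) z := by
  intro τ hτ z
  by_cases hz : ∃ q r : ℚ, z = (q : ℂ) * τ + (r : ℂ)
  swap
  · exact hpoles τ hτ z hz
  obtain ⟨q, r, hzqr⟩ := hz
  set n : ℤ := q.num * r.den with hn
  set p : ℤ := r.num * q.den with hp
  set m : ℤ := (q.den : ℤ) * r.den with hm
  have hqd : ((q.den : ℂ)) ≠ 0 := by exact_mod_cast q.den_nz
  have hrd : ((r.den : ℂ)) ≠ 0 := by exact_mod_cast r.den_nz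
  have hm0 : (m : ℂ) ≠ 0 := by
    rw [hm]; push_cast; exact mul_ne_zero hqd hrd
  have hmz : (m : ℂ) * z = (n : ℂ) * τ + (p : ℂ) := by
    rw [hzqr, hn, hp, hm]
    rw [Rat.cast_def, Rat.cast_def]
    push_cast
    field_simp
  by_cases hnp : n = 0 ∧ p = 0
  · have hz0 : z = 0 := by
      have : (m : ℂ) * z = 0 := by rw [hmz, hnp.1, hnp.2]; simp
      exact (mul_eq_zero.mp this).resolve_left hm0
    have := hreal τ hτ 0
    simpa [hz0] using this
  -- nontrivial case
  set g : ℤ := (Int.gcd n p : ℤ) with hg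
  have hgpos : 0 < Int.gcd n p := by
    rcases Nat.eq_zero_or_pos (Int.gcd n p) with h0 | h0
    · exact absurd (Int.gcd_eq_zero_iff.mp h0) hnp
    · exact h0
  set c : ℤ := n / g with hc
  set d : ℤ := p / g with hd
  have hcd : Int.gcd c d = 1 := Int.gcd_div_gcd_div_gcd hgpos
  have hgc : g * c = n := Int.mul_ediv_cancel' (Int.gcd_dvd_left n p)
  have hgd : g * d = p := Int.mul_ediv_cancel' (Int.gcd_dvd_right n p)
  obtain ⟨u, v, huv⟩ := Int.isCoprime_iff_gcd_eq_one.mpr hcd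
  set a : ℤ := v with ha
  set b : ℤ := -u with hb
  have hdet : a * d - b * c = 1 := by rw [ha, hb]; linarith [huv]
  set A : Matrix.SpecialLinearGroup (Fin 2) ℤ :=
    ⟨!![a, b; c, d], by rw [Matrix.det_fin_two_of]; linarith [hdet]⟩ with hA
  have e00 : slEntry A 0 0 = (a : ℂ) := rfl
  have e01 : slEntry A 0 1 = (b : ℂ) := rfl
  have e10 : slEntry A 1 0 = (c : ℂ) := rfl
  have e11 : slEntry A 1 1 = (d : ℂ) := rfl
  set D : ℂ := (c : ℂ) * τ + (d : ℂ) with hD_def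
  have hD : D ≠ 0 := by
    intro h0
    have him : (c : ℝ) * τ.im = 0 := by
      have := congrArg Complex.im h0
      simpa [hD_def, Complex.add_im, Complex.mul_im] using this
    have hc0 : c = 0 := by
      rcases mul_eq_zero.mp him with h | h
      · exact_mod_cast h
      · exact absurd h hτ.ne'
    have hd0 : d = 0 := by
      have := congrArg Complex.re h0
      rw [hD_def, hc0] at this
      simpa using this
    rw [hc0, hd0] at hcd
    simp at hcd
  have hmzD : (m : ℂ) * z = (g : ℂ) * D := by
    rw [hmz, hD_def, ← hgc, ← hgd]; push_cast; ring
  have hzD : z / D = ((((g : ℝ) / (m : ℝ)) : ℝ) : ℂ) := by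
    push_cast
    field_simp
    linear_combination hmzD
  set τ' : ℂ := ((a : ℂ) * τ + (b : ℂ)) / D with hτ'_def
  have hτ' : 0 < τ'.im := mobius_im_pos a b c d τ hdet hτ hD
  have hFan : AnalyticAt ℂ (F τ') (z / D) := by
    rw [hzD]; exact hreal τ' hτ' _
  have hne : ∀ w : ℂ, D ^ k *
      Complex.exp (2 * Real.pi * Complex.I * Ind * ((c : ℂ) * w ^ 2 / D)) ≠ 0 :=
    fun w => mul_ne_zero (zpow_ne_zero k hD) (Complex.exp_ne_zero _)
  have hFG : F τ = fun w => F τ' (w / D) *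
      (D ^ k * Complex.exp (2 * Real.pi * Complex.I * Ind * ((c : ℂ) * w ^ 2 / D)))⁻¹ := by
    funext w
    have h := hmod τ w hτ A
    rw [e00, e01, e10, e11, ← hD_def, ← hτ'_def] at h
    rw [h, mul_assoc (F τ w)]
    exact (mul_inv_cancel_right₀ (hne w) _).symm
  rw [hFG]
  have h1 : AnalyticAt ℂ (fun w : ℂ => F τ' (w / D)) z := by
    have hdiv : AnalyticAt ℂ (fun w : ℂ => w / D) z :=
      analyticAt_id.div analyticAt_const hD
    exact AnalyticAt.comp (f := fun w : ℂ => w / D) (x := z) hFan hdiv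
  have h2 : AnalyticAt ℂ (fun w : ℂ =>
      (D ^ k * Complex.exp (2 * Real.pi * Complex.I * Ind * ((c : ℂ) * w ^ 2 / D)))⁻¹) z := by
    have hfa : AnalyticAt ℂ (fun w : ℂ =>
        D ^ k * Complex.exp (2 * Real.pi * Complex.I * Ind * ((c : ℂ) * w ^ 2 / D))) z := by
      apply analyticAt_const.mul
      apply AnalyticAt.cexp
      exact analyticAt_const.mul
        ((analyticAt_const.mul (analyticAt_id.pow 2)).div analyticAt_const hD)
    exact hfa.inv (hne z)
  exact h1.mul h2
end

section
/- For any (τ, z) ∈ ℍ × ℂ with z ∈ ℚτ + ℚ, there exists a matrix (a b; c d) ∈ SL₂(ℤ) and τ₀ ∈ ℍ such that the action A·(τ,z) = ((aτ+b)/(cτ+d), z/(cτ+d)) sends (τ, z) to a point (τ₀, z₀) with z₀ ∈ ℚ ⊆ ℝ. -/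
open Complex

lemma im_pos_aux (a b c d : ℤ) (h : a * d - b * c = 1) (τ : ℂ) (ht : 0 < τ.im)
    (hcd : ((c : ℂ) * τ + d) ≠ 0) :
    0 < (((a : ℂ) * τ + b) / ((c : ℂ) * τ + d)).im := by
  have hn : 0 < Complex.normSq ((c : ℂ) * τ + d) := Complex.normSq_pos.mpr hcd
  have h' : (a : ℝ) * d - b * c = 1 := by exact_mod_cast h
  have key : (((a : ℂ) * τ + b) / ((c : ℂ) * τ + d)).im
      = τ.im / Complex.normSq ((c : ℂ) * τ + d) := by
    rw [Complex.div_im]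
    simp only [Complex.add_im, Complex.add_re, Complex.mul_im, Complex.mul_re,
      Complex.intCast_re, Complex.intCast_im]
    field_simp
    ring_nf
    nlinarith [h']
  rw [key]
  positivity

def mkSL (a b c d : ℤ) (h : a * d - b * c = 1) : Matrix.SpecialLinearGroup (Fin 2) ℤ :=
  ⟨!![a, b; c, d], by simp [Matrix.det_fin_two_of, h]⟩

lemma mkSL_entries (a b c d : ℤ) (h : a * d - b * c = 1) :
    slEntry (mkSL a b c d h) 0 0 = a ∧ slEntry (mkSL a b c d h) 0 1 = b ∧
    slEntry (mkSL a b c d h) 1 0 = c ∧ slEntry (mkSL a b c d h) 1 1 = d := by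
  refine ⟨?_, ?_, ?_, ?_⟩ <;> simp [slEntry, mkSL]

/-- For `(τ, z) ∈ ℍ × ℂ` with `z ∈ ℚτ + ℚ`, there is a matrix `A ∈ SL₂(ℤ)` whose action
`A·(τ,z) = ((aτ+b)/(cτ+d), z/(cτ+d))` sends `(τ, z)` to a point `(τ₀, z₀)` with `τ₀` in the
upper half-plane and `z₀ ∈ ℚ ⊆ ℝ`. -/
theorem stmt4 (τ z : ℂ) (hτ : 0 < τ.im) (q r : ℚ) (hz : z = (q : ℂ) * τ + (r : ℂ)) :
    ∃ A : Matrix.SpecialLinearGroup (Fin 2) ℤ,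
      0 < ((slEntry A 0 0 * τ + slEntry A 0 1) / (slEntry A 1 0 * τ + slEntry A 1 1)).im ∧
      ∃ w : ℚ, z / (slEntry A 1 0 * τ + slEntry A 1 1) = (w : ℂ) := by
  by_cases hq : q = 0
  · -- identity matrix
    refine ⟨mkSL 1 0 0 1 (by norm_num), ?_, r, ?_⟩
    · obtain ⟨h00, h01, h10, h11⟩ := mkSL_entries 1 0 0 1 (by norm_num)
      rw [h00, h01, h10, h11]
      simpa using hτ
    · obtain ⟨h00, h01, h10, h11⟩ := mkSL_entries 1 0 0 1 (by norm_num)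
      rw [h10, h11, hz, hq]
      push_cast
      simp
  · -- q ≠ 0
    set p : ℤ := q.num * r.den with hp
    set m : ℤ := r.num * q.den with hm
    have hp0 : p ≠ 0 := by
      simp [hp, Rat.num_ne_zero, hq, r.den_nz]
    have hg0 : (Int.gcd p m : ℤ) ≠ 0 := by
      simp only [ne_eq, Int.natCast_eq_zero, Int.gcd_eq_zero_iff, not_and]
      exact fun h => absurd h hp0
    set g : ℤ := (Int.gcd p m : ℤ) with hgdef
    set c : ℤ := p / g with hc
    set d : ℤ := m / g with hd
    have hgc : g * c = p := Int.mul_ediv_cancel' (Int.gcd_dvd_left p m)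
    have hgd : g * d = m := Int.mul_ediv_cancel' (Int.gcd_dvd_right p m)
    have hcop : IsCoprime c d := by
      rw [Int.isCoprime_iff_gcd_eq_one]
      exact Int.gcd_div_gcd_div_gcd (Int.gcd_pos_of_ne_zero_left m hp0)
    obtain ⟨u, v, huv⟩ := hcop
    have hdet : v * d - (-u) * c = 1 := by linarith [huv]
    obtain ⟨h00, h01, h10, h11⟩ := mkSL_entries v (-u) c d hdet
    have hc0 : c ≠ 0 := by
      intro h
      apply hp0
      rw [← hgc, h, mul_zero]
    have hcd : ((c : ℂ) * τ + d) ≠ 0 := by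
      intro h
      have : ((c : ℂ) * τ + d).im = 0 := by rw [h]; simp
      simp only [Complex.add_im, Complex.mul_im, Complex.intCast_im, Complex.intCast_re] at this
      have : (c : ℝ) * τ.im = 0 := by linarith [this]
      rcases mul_eq_zero.mp this with h' | h'
      · exact hc0 (by exact_mod_cast h')
      · linarith
    refine ⟨mkSL v (-u) c d hdet, ?_, ?_⟩
    · rw [h00, h01, h10, h11]
      exact im_pos_aux v (-u) c d hdet τ hτ hcd
    · refine ⟨(g : ℚ) / ((q.den : ℚ) * (r.den : ℚ)), ?_⟩
      rw [h10, h11]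
      have hqden : ((q.den : ℂ)) ≠ 0 := by exact_mod_cast q.den_nz
      have hrden : ((r.den : ℂ)) ≠ 0 := by exact_mod_cast r.den_nz
      have hgC : (g : ℂ) ≠ 0 := by exact_mod_cast hg0
      have hz2 : z = ((p : ℂ) * τ + (m : ℂ)) / ((q.den : ℂ) * (r.den : ℂ)) := by
        rw [hz, Rat.cast_def, Rat.cast_def]
        push_cast [hp, hm]
        field_simp
      have hcd2 : (c : ℂ) * τ + (d : ℂ) = ((p : ℂ) * τ + (m : ℂ)) / (g : ℂ) := by
        have h1 : (g : ℂ) * c = p := by exact_mod_cast hgc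
        have h2 : (g : ℂ) * d = m := by exact_mod_cast hgd
        field_simp [← h1, ← h2]
        linear_combination τ * h1 + h2
      have hpm : ((p : ℂ) * τ + (m : ℂ)) ≠ 0 := by
        intro h
        have : ((p : ℂ) * τ + (m : ℂ)).im = 0 := by rw [h]; simp
        simp only [Complex.add_im, Complex.mul_im, Complex.intCast_im, Complex.intCast_re] at this
        have : (p : ℝ) * τ.im = 0 := by linarith [this]
        rcases mul_eq_zero.mp this with h' | h'
        · exact hp0 (by exact_mod_cast h')
        · linarith
      rw [hz2, hcd2]
      push_cast
      field_simp
end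

section
/- Suppose F : ℍ × ℂ → ℂ is a meromorphic function that is the product of a holomorphic function e(z) of z alone, nonvanishing for z ∈ ℝ, and a Jacobi function F₀ for SL₂(ℤ)⋉ℤ² of index I whose poles (for each fixed τ) lie in ℚτ + ℚ. If F has no poles for z ∈ ℝ and F₀ does not vanish identically, then I ≥ 0. -/
open Complex

private lemma aux_denom_ne (τ : ℂ) (hτ : 0 < τ.im) (c d : ℤ) (hc : c ≠ 0) : ((c:ℂ)*τ + d) ≠ 0 := by
  intro h
  have h1 : ((c:ℂ)*τ + (d:ℂ)).im = 0 := by rw [h]; simp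
  have h2 : ((c:ℂ)*τ + (d:ℂ)).im = (c:ℝ) * τ.im := by simp
  rw [h2] at h1
  exact absurd h1 (mul_ne_zero (Int.cast_ne_zero.mpr hc) (ne_of_gt hτ))

private lemma aux_im_pos (τ : ℂ) (hτ : 0 < τ.im) (p q c d : ℤ) (hdet : p * d - q * c = 1)
    (hD : ((c:ℂ) * τ + d) ≠ 0) :
    0 < (((p:ℂ) * τ + q) / ((c:ℂ) * τ + d)).im := by
  rw [Complex.div_im]
  have hns : 0 < Complex.normSq ((c:ℂ)*τ+d) := Complex.normSq_pos.2 hD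
  have h1 : ((p:ℂ)*τ+(q:ℂ)).im = (p:ℝ) * τ.im := by simp
  have h2 : ((p:ℂ)*τ+(q:ℂ)).re = (p:ℝ) * τ.re + q := by simp
  have h3 : ((c:ℂ)*τ+(d:ℂ)).im = (c:ℝ) * τ.im := by simp
  have h4 : ((c:ℂ)*τ+(d:ℂ)).re = (c:ℝ) * τ.re + d := by simp
  rw [h1, h2, h3, h4, div_sub_div_same]
  apply div_pos _ hns
  have hdet' : (p:ℝ)*d - q*c = 1 := by exact_mod_cast hdet
  have : (p:ℝ) * τ.im * ((c:ℝ) * τ.re + d) - ((p:ℝ) * τ.re + q) * ((c:ℝ) * τ.im) = τ.im := by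
    linear_combination τ.im * hdet'
  rw [this]; exact hτ

/-- The real part of `-2πi·m·W` is `2π·m·Im W`. -/
private lemma aux_re (m : ℤ) (W : ℂ) :
    (-2 * (Real.pi:ℂ) * Complex.I * (m:ℂ) * W).re = 2 * Real.pi * (m:ℝ) * W.im := by
  simp [Complex.mul_re, Complex.mul_im]

/-- Suppose `F(τ,z) = e(z) · F₀(τ,z)` where `e` is a holomorphic function of `z` alone which
does not vanish for real `z`, and `F₀` is a (meromorphic) Jacobi function for `SL₂(ℤ) ⋉ ℤ²`
of weight `k` and index `Ind` whose poles, for each fixed `τ ∈ ℍ`, lie in `ℚτ + ℚ`.  If `F`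
has no poles for `z ∈ ℝ` and `F₀` does not vanish identically, then `Ind ≥ 0`. -/
theorem stmt15 (e : ℂ → ℂ) (F₀ : ℂ → ℂ → ℂ) (k Ind : ℤ)
    (he : Differentiable ℂ e) (heR : ∀ x : ℝ, e (x : ℂ) ≠ 0)
    (hmero : ∀ τ : ℂ, 0 < τ.im → ∀ z : ℂ, MeromorphicAt (F₀ τ) z)
    (hell : ∀ τ z : ℂ, 0 < τ.im → ∀ α β : ℤ,
      F₀ τ (z + α * τ + β) =
        F₀ τ z * Complex.exp (-2 * Real.pi * Complex.I * Ind * (α ^ 2 * τ + 2 * α * z)))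
    (hmod : ∀ τ z : ℂ, 0 < τ.im → ∀ A : Matrix.SpecialLinearGroup (Fin 2) ℤ,
      F₀ ((slEntry A 0 0 * τ + slEntry A 0 1) / (slEntry A 1 0 * τ + slEntry A 1 1))
          (z / (slEntry A 1 0 * τ + slEntry A 1 1)) =
        F₀ τ z * (slEntry A 1 0 * τ + slEntry A 1 1) ^ k *
          Complex.exp (2 * Real.pi * Complex.I * Ind *
            (slEntry A 1 0 * z ^ 2 / (slEntry A 1 0 * τ + slEntry A 1 1))))
    (hpoles : ∀ τ : ℂ, 0 < τ.im → ∀ z : ℂ,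
      (¬ ∃ q r : ℚ, z = (q : ℂ) * τ + (r : ℂ)) → AnalyticAt ℂ (F₀ τ) z)
    (hrealF : ∀ τ : ℂ, 0 < τ.im → ∀ x : ℝ,
      AnalyticAt ℂ (fun z => e z * F₀ τ z) (x : ℂ))
    (hne : ∃ τ z : ℂ, 0 < τ.im ∧ F₀ τ z ≠ 0) :
    0 ≤ Ind := by
  by_contra hInd
  push_neg at hInd
  obtain ⟨τ₀, z₀, hτ₀, hz₀⟩ := hne
  -- Step 1: F₀ τ is analytic at every real point, for every τ ∈ ℍ.
  have hreal : ∀ τ : ℂ, 0 < τ.im → ∀ x : ℝ, AnalyticAt ℂ (F₀ τ) (x:ℂ) := by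
    intro τ hτ x
    have h3 : AnalyticAt ℂ (fun z => e z * F₀ τ z * (e z)⁻¹) (x:ℂ) :=
      (hrealF τ hτ x).mul ((he.analyticAt _).inv (heR x))
    apply h3.congr
    have hne' : ∀ᶠ z in nhds (x:ℂ), e z ≠ 0 :=
      (he.continuous.continuousAt).eventually_ne (heR x)
    filter_upwards [hne'] with z hz
    field_simp
  -- Step 2: F₀ τ₀ is entire.
  have hent : ∀ z : ℂ, AnalyticAt ℂ (F₀ τ₀) z := by
    intro z
    by_cases hzq : ¬ ∃ q r : ℚ, z = (q:ℂ) * τ₀ + (r:ℂ)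
    · exact hpoles τ₀ hτ₀ z hzq
    rw [not_not] at hzq
    obtain ⟨q, r, rfl⟩ := hzq
    by_cases hq : q = 0
    · subst hq
      have hrw : ((0:ℚ):ℂ)*τ₀ + (r:ℂ) = (((r:ℝ)):ℂ) := by push_cast; ring
      rw [hrw]
      exact hreal τ₀ hτ₀ _
    · set a : ℤ := q.num * r.den with ha_def
      set b : ℤ := r.num * q.den with hb_def
      set n : ℤ := (q.den : ℤ) * r.den with hn_def
      have hqd : ((q.den:ℂ)) ≠ 0 := Nat.cast_ne_zero.mpr q.den_nz
      have hrd : ((r.den:ℂ)) ≠ 0 := Nat.cast_ne_zero.mpr r.den_nz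
      have hn : (n:ℂ) ≠ 0 := by rw [hn_def]; push_cast; exact mul_ne_zero hqd hrd
      have hrep : (q:ℂ)*τ₀ + (r:ℂ) = ((a:ℂ)*τ₀ + (b:ℂ))/(n:ℂ) := by
        rw [Rat.cast_def, Rat.cast_def, ha_def, hb_def, hn_def]
        push_cast
        field_simp
      have ha : a ≠ 0 := mul_ne_zero (Rat.num_ne_zero.mpr hq) (by exact_mod_cast r.den_nz)
      set g : ℕ := Int.gcd a b with hg_def
      have hg : 0 < Int.gcd a b := Int.gcd_pos_of_ne_zero_left b ha
      set c : ℤ := a / (g:ℤ) with hc_def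
      set d : ℤ := b / (g:ℤ) with hd_def
      have hac : a = (g:ℤ) * c := (Int.mul_ediv_cancel' (Int.gcd_dvd_left a b)).symm
      have hbd : b = (g:ℤ) * d := (Int.mul_ediv_cancel' (Int.gcd_dvd_right a b)).symm
      have hcd : Int.gcd c d = 1 := Int.gcd_div_gcd_div_gcd hg
      have hc : c ≠ 0 := by
        intro h; rw [h, mul_zero] at hac; exact ha hac
      obtain ⟨u, v, huv⟩ := Int.isCoprime_iff_gcd_eq_one.mpr hcd
      set A : Matrix.SpecialLinearGroup (Fin 2) ℤ := ⟨!![v, -u; c, d], by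
        simp [Matrix.det_fin_two_of]
        linarith⟩ with hA_def
      have hA00 : slEntry A 0 0 = ((v:ℤ):ℂ) := rfl
      have hA01 : slEntry A 0 1 = ((-u:ℤ):ℂ) := rfl
      have hA10 : slEntry A 1 0 = ((c:ℤ):ℂ) := rfl
      have hA11 : slEntry A 1 1 = ((d:ℤ):ℂ) := rfl
      set D : ℂ := (c:ℂ)*τ₀ + (d:ℂ) with hD_def
      have hD : D ≠ 0 := aux_denom_ne τ₀ hτ₀ c d hc
      set τ₁ : ℂ := ((v:ℂ)*τ₀ + ((-u:ℤ):ℂ)) / D with hτ₁_def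
      have hτ₁ : 0 < τ₁.im := by
        rw [hτ₁_def, hD_def]
        exact aux_im_pos τ₀ hτ₀ v (-u) c d (by linarith) (hD_def ▸ hD)
      have hDk : D ^ k ≠ 0 := zpow_ne_zero k hD
      have hkey : ∀ w : ℂ, F₀ τ₁ (w / D) =
          F₀ τ₀ w * D ^ k * Complex.exp (2 * Real.pi * Complex.I * Ind * ((c:ℂ) * w^2 / D)) := by
        intro w
        have := hmod τ₀ w hτ₀ A
        rw [hA00, hA01, hA10, hA11] at this
        exact this
      have hpt : ((q:ℂ)*τ₀ + (r:ℂ)) / D = ((((g:ℝ)/((q.den:ℝ)*(r.den:ℝ))):ℝ):ℂ) := by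
        rw [hrep]
        have hnum : (a:ℂ)*τ₀ + (b:ℂ) = (g:ℂ) * D := by
          rw [hD_def, hac, hbd]; push_cast; ring
        rw [hnum]
        rw [hn_def]
        push_cast
        field_simp
      have hg_an : AnalyticAt ℂ (fun w => F₀ τ₁ (w / D) *
          ((D ^ k)⁻¹ * Complex.exp (-(2 * Real.pi * Complex.I * Ind * ((c:ℂ) * w^2 / D)))))
          ((q:ℂ)*τ₀ + (r:ℂ)) := by
        apply AnalyticAt.mul
        · have hinner : AnalyticAt ℂ (fun w : ℂ => w / D) ((q:ℂ)*τ₀ + (r:ℂ)) :=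
            (analyticAt_id).div analyticAt_const hD
          have houter : AnalyticAt ℂ (F₀ τ₁) (((q:ℂ)*τ₀ + (r:ℂ))/D) := by
            rw [hpt]; exact hreal τ₁ hτ₁ _
          exact AnalyticAt.comp (g := F₀ τ₁) (f := fun w : ℂ => w / D) houter hinner
        · apply AnalyticAt.mul analyticAt_const
          have hdif : Differentiable ℂ
              (fun w : ℂ => Complex.exp (-(2 * Real.pi * Complex.I * Ind * ((c:ℂ) * w^2 / D)))) := by
            apply Complex.differentiable_exp.comp
            fun_prop
          exact hdif.analyticAt _
      have heq : F₀ τ₀ = fun w => F₀ τ₁ (w / D) *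
          ((D ^ k)⁻¹ * Complex.exp (-(2 * Real.pi * Complex.I * Ind * ((c:ℂ) * w^2 / D)))) := by
        funext w
        rw [hkey w, Complex.exp_neg]
        field_simp
      rw [heq]
      exact hg_an
  -- Step 3: F₀ τ₀ is entire and "doubly quasi-periodic"; bounded; Liouville.
  have hdiff : Differentiable ℂ (F₀ τ₀) := fun z => (hent z).differentiableAt
  set v₀ : ℝ := τ₀.im with hv₀_def
  have hv₀ : 0 < v₀ := hτ₀
  -- bound on the fundamental parallelogram
  set P : Set ℂ := (fun p : ℝ × ℝ => (p.1:ℂ)*τ₀ + (p.2:ℂ)) '' (Set.Icc (0:ℝ) 1 ×ˢ Set.Icc (0:ℝ) 1)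
    with hP_def
  have hPc : IsCompact P := (isCompact_Icc.prod isCompact_Icc).image (by fun_prop)
  obtain ⟨C, hC⟩ := hPc.exists_bound_of_continuousOn (hdiff.continuous.continuousOn)
  have hC0 : 0 ≤ C := le_trans (norm_nonneg _) (hC ((0:ℂ)) ⟨(0,0), by simp⟩)
  set M : ℝ := C * Real.exp (2 * Real.pi * (-(Ind:ℝ)) * v₀) with hM_def
  have hbound : ∀ z : ℂ, ‖F₀ τ₀ z‖ ≤ M := by
    intro z
    set s : ℝ := z.im / v₀ with hs_def
    set t : ℝ := z.re - s * τ₀.re with ht_def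
    set α : ℤ := ⌊s⌋ with hα_def
    set β : ℤ := ⌊t⌋ with hβ_def
    set s' : ℝ := s - α with hs'_def
    set t' : ℝ := t - β with ht'_def
    have hs'0 : 0 ≤ s' := by rw [hs'_def]; exact sub_nonneg.mpr (Int.floor_le s)
    have hs'1 : s' ≤ 1 := by rw [hs'_def]; have := Int.lt_floor_add_one s; linarith
    have ht'0 : 0 ≤ t' := by rw [ht'_def]; exact sub_nonneg.mpr (Int.floor_le t)
    have ht'1 : t' ≤ 1 := by rw [ht'_def]; have := Int.lt_floor_add_one t; linarith
    set z' : ℂ := (s':ℂ)*τ₀ + (t':ℂ) with hz'_def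
    have hz'P : z' ∈ P := ⟨(s', t'), ⟨⟨hs'0, hs'1⟩, ⟨ht'0, ht'1⟩⟩, rfl⟩
    have hzz : z = z' + (α:ℂ) * τ₀ + (β:ℂ) := by
      apply Complex.ext
      · simp [hz'_def, ht'_def, ht_def, hs'_def]
        ring
      · simp [hz'_def, hs'_def, hs_def]
        rw [hv₀_def]
        have hv' : τ₀.im ≠ 0 := ne_of_gt hv₀
        field_simp
        ring
    have hellz := hell τ₀ z' hτ₀ α β
    rw [hzz, hellz, norm_mul]
    have h2im : ((α:ℂ)^2 * τ₀ + 2*(α:ℂ)*z').im = (α:ℝ)^2 * v₀ + 2*(α:ℝ)*(s'*v₀) := by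
      simp [hz'_def, Complex.add_im, Complex.mul_im, Complex.mul_re]
      rw [hv₀_def]
      norm_cast
      simp
    have hnorm_exp : ‖Complex.exp (-2 * Real.pi * Complex.I * Ind * ((α:ℂ)^2 * τ₀ + 2*(α:ℂ)*z'))‖
        = Real.exp (2 * Real.pi * (Ind:ℝ) * ((α:ℝ)^2 * v₀ + 2*(α:ℝ)*(s'*v₀))) := by
      rw [Complex.norm_exp, aux_re]
      congr 1
      rw [h2im]
    rw [hnorm_exp]
    have hfz' : ‖F₀ τ₀ z'‖ ≤ C := hC z' hz'P
    have hEle : Real.exp (2 * Real.pi * (Ind:ℝ) * ((α:ℝ)^2 * v₀ + 2*(α:ℝ)*(s'*v₀)))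
        ≤ Real.exp (2 * Real.pi * (-(Ind:ℝ)) * v₀) := by
      apply Real.exp_le_exp.mpr
      have hIle : (Ind:ℝ) < 0 := by exact_mod_cast hInd
      have hkey2 : (α:ℝ)^2 + 2*(α:ℝ)*s' + 1 ≥ 0 := by nlinarith [sq_nonneg ((α:ℝ) + s')]
      nlinarith [mul_nonneg (mul_nonneg Real.pi_pos.le hv₀.le) hkey2]
    calc ‖F₀ τ₀ z'‖ * Real.exp (2 * Real.pi * (Ind:ℝ) * ((α:ℝ)^2 * v₀ + 2*(α:ℝ)*(s'*v₀)))
        ≤ C * Real.exp (2 * Real.pi * (Ind:ℝ) * ((α:ℝ)^2 * v₀ + 2*(α:ℝ)*(s'*v₀))) := by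
          exact mul_le_mul_of_nonneg_right hfz' (Real.exp_pos _).le
      _ ≤ M := by rw [hM_def]; exact mul_le_mul_of_nonneg_left hEle hC0
  have hbdd : Bornology.IsBounded (Set.range (F₀ τ₀)) := by
    rw [isBounded_iff_forall_norm_le]
    exact ⟨M, by rintro x ⟨z, rfl⟩; exact hbound z⟩
  have hconst := hdiff.apply_eq_apply_of_bounded hbdd
  have h1 := hell τ₀ 0 hτ₀ 1 0
  simp only [Int.cast_one, Int.cast_zero, one_mul, mul_zero, add_zero, zero_add, one_pow] at h1
  -- h1 : F₀ τ₀ τ₀ = F₀ τ₀ 0 * exp (-2πI Ind (τ₀ + 0))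
  have h2 : F₀ τ₀ τ₀ = F₀ τ₀ 0 := hconst τ₀ 0
  have h3 : F₀ τ₀ 0 ≠ 0 := by
    rw [hconst 0 z₀]; exact hz₀
  have hE1 : Complex.exp (-2 * Real.pi * Complex.I * Ind * τ₀) = 1 := by
    have hh : F₀ τ₀ 0 * 1 = F₀ τ₀ 0 * Complex.exp (-2 * Real.pi * Complex.I * Ind * τ₀) := by
      rw [mul_one]
      conv_lhs => rw [← h2]
      exact h1
    exact (mul_left_cancel₀ h3 hh).symm
  have habs : Real.exp (2 * Real.pi * (Ind:ℝ) * τ₀.im) = 1 := by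
    have h4 := congrArg (‖·‖) hE1
    rw [Complex.norm_exp, norm_one, aux_re] at h4
    exact h4
  rw [Real.exp_eq_one_iff] at habs
  have hIlt : (Ind:ℝ) < 0 := by exact_mod_cast hInd
  have hprod : (Ind:ℝ) * (2 * Real.pi * τ₀.im) < 0 :=
    mul_neg_of_neg_of_pos hIlt (by positivity)
  nlinarith [hprod]
end
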